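/- arXiv:1108.3494 — 3 statements merged into one kernel-verified Lean document; each statement's English description precedes it below -/
import Mathlib

section
/- For every natural number k ≥ 1, let n = 4k+2 and let g : {0,1}^n → {0,1} be the pattern function: g(x) = 1 iff there exists j ∈ [2k+1] such that x satisfies pattern P_j, where P_j requires x_{2j-1} = x_{2j} = 1 and, for all i ∈ [k], x_{2j+2i} = 0 and x_{2j-2i-1} = x_{2j-2i} = 0 (all indices taken modulo n). Then the 1-sensitivity of g equals 3k+2, i.e., s_1(g) = 3k+2. -/
section Defs

variable {ι : Type} [Fintype ι] [DecidableEq ι]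

/-- `flipBit x i` is `x` with its `i`-th bit flipped. -/
def flipBit (x : ι → Bool) (i : ι) : ι → Bool :=
  Function.update x i (!x i)

/-- `flipBlock x B` is `x` with all bits indexed by `B` flipped. -/
def flipBlock (x : ι → Bool) (B : Finset ι) : ι → Bool :=
  fun j => if j ∈ B then !x j else x j

/-- The sensitivity of `f` at `x`: the number of `i` with `f (x^(i)) ≠ f x`. -/
def sensAt (f : (ι → Bool) → Bool) (x : ι → Bool) : ℕ :=
  (Finset.univ.filter fun i => f (flipBit x i) ≠ f x).card

/-- The sensitivity `s(f) = max_x s(f,x)`. -/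
def sens (f : (ι → Bool) → Bool) : ℕ :=
  Finset.univ.sup (sensAt f)

/-- The 0-sensitivity `s₀(f) = max_{x : f x = 0} s(f,x)`. -/
def sens0 (f : (ι → Bool) → Bool) : ℕ :=
  (Finset.univ.filter fun x => f x = false).sup (sensAt f)

/-- The 1-sensitivity `s₁(f) = max_{x : f x = 1} s(f,x)`. -/
def sens1 (f : (ι → Bool) → Bool) : ℕ :=
  (Finset.univ.filter fun x => f x = true).sup (sensAt f)

/-- The block sensitivity of `f` at `x`: the largest `b` such that there are
`b` pairwise disjoint blocks on which flipping `x` changes the value of `f`. -/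
noncomputable def bsAt (f : (ι → Bool) → Bool) (x : ι → Bool) : ℕ :=
  sSup {b : ℕ | ∃ Bl : Fin b → Finset ι,
    (Pairwise fun p q => Disjoint (Bl p) (Bl q)) ∧
    ∀ p, f (flipBlock x (Bl p)) ≠ f x}

/-- The block sensitivity `bs(f) = max_x bs(f,x)`. -/
noncomputable def bs (f : (ι → Bool) → Bool) : ℕ :=
  Finset.univ.sup (bsAt f)

/-- The 0-block-sensitivity `bs₀(f) = max_{x : f x = 0} bs(f,x)`. -/
noncomputable def bs0 (f : (ι → Bool) → Bool) : ℕ :=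
  (Finset.univ.filter fun x => f x = false).sup (bsAt f)

end Defs

/-- The coordinate of `{0,1}^{4k+2}` with (1-based) index `t`, taken modulo `4k+2`. -/
def pidx (k : ℕ) (t : ℤ) : Fin (4*k+2) :=
  ⟨(t % (4*(k:ℤ)+2)).toNat, by
    have h0 : (0:ℤ) < 4*(k:ℤ)+2 := by positivity
    have h1 := Int.emod_nonneg t (ne_of_gt h0)
    have h2 := Int.emod_lt_of_pos t h0
    omega⟩

/-- `x` satisfies the pattern `P_j`: `x_{2j-1} = x_{2j} = 1` and, for all `i ∈ [k]`,
`x_{2j+2i} = 0` and `x_{2j-2i-1} = x_{2j-2i} = 0`, indices taken modulo `4k+2`. -/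
def SatPat (k : ℕ) (j : ℤ) (x : Fin (4*k+2) → Bool) : Prop :=
  x (pidx k (2*j-1)) = true ∧ x (pidx k (2*j)) = true ∧
  ∀ i : ℤ, 1 ≤ i → i ≤ (k:ℤ) →
    x (pidx k (2*j+2*i)) = false ∧
    x (pidx k (2*j-2*i-1)) = false ∧
    x (pidx k (2*j-2*i)) = false


/-!
A 1-input `x` satisfies some pattern `P_j`, and flipping a coordinate that `P_j` leaves free keeps
`P_j` satisfied, so `s(g, x)` is at most the number `3k+2` of coordinates fixed by `P_j`.

For the lower bound take the input `x` whose only ones are `x₁ = x₂ = 1`. All even coordinates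
are fixed by every pattern and `P_j` puts its unique even one at `2j`, so after flipping a
coordinate fixed by `P₁` the only pattern that can still hold is `P₁` itself, which that flip
just violated.
-/

section Sensitivity

variable {ι : Type} [DecidableEq ι]

theorem flipBit_apply_self (x : ι → Bool) (i : ι) : flipBit x i i = !x i :=
  Function.update_self _ _ _

theorem flipBit_apply_of_ne (x : ι → Bool) {i v : ι} (h : v ≠ i) : flipBit x i v = x v :=
  Function.update_of_ne h _ _

theorem sensAt_le_card [Fintype ι] {f : (ι → Bool) → Bool} {x : ι → Bool} {S : Finset ι}
    (hS : ∀ y, (∀ v ∈ S, y v = x v) → f y = f x) : sensAt f x ≤ S.card := by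
  refine Finset.card_le_card fun i hi => ?_
  by_contra hiS
  refine (Finset.mem_filter.1 hi).2 (hS _ fun v hv => flipBit_apply_of_ne x ?_)
  rintro rfl
  exact hiS hv

theorem card_le_sensAt [Fintype ι] {f : (ι → Bool) → Bool} {x : ι → Bool} {S : Finset ι}
    (hS : ∀ i ∈ S, f (flipBit x i) ≠ f x) : S.card ≤ sensAt f x :=
  Finset.card_le_card fun i hi => Finset.mem_filter.2 ⟨Finset.mem_univ i, hS i hi⟩

theorem sens1_le [Fintype ι] {f : (ι → Bool) → Bool} {m : ℕ}
    (h : ∀ x, f x = true → sensAt f x ≤ m) : sens1 f ≤ m :=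
  Finset.sup_le fun x hx => h x (Finset.mem_filter.1 hx).2

theorem sensAt_le_sens1 [Fintype ι] {f : (ι → Bool) → Bool} {x : ι → Bool}
    (hx : f x = true) : sensAt f x ≤ sens1 f :=
  Finset.le_sup (Finset.mem_filter.2 ⟨Finset.mem_univ x, hx⟩)

end Sensitivity

section Patterns

variable {k : ℕ}

theorem pidx_eq_pidx_iff {a b : ℤ} : pidx k a = pidx k b ↔ (4 * (k : ℤ) + 2) ∣ b - a := by
  have hN : (0 : ℤ) < 4 * k + 2 := by positivity
  rw [Fin.ext_iff, ← Int.modEq_iff_dvd]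
  simp only [pidx]
  constructor
  · intro h
    rw [Int.ModEq, ← Int.toNat_of_nonneg (Int.emod_nonneg a hN.ne'),
      ← Int.toNat_of_nonneg (Int.emod_nonneg b hN.ne'), h]
  · intro h
    rw [h.eq]

/-- The form in which `pidx_eq_pidx_iff` is consumed by `omega`. -/
theorem sub_even_and_eq_or_far_of_pidx_eq {a b : ℤ} (h : pidx k a = pidx k b) :
    2 ∣ b - a ∧ (a = b ∨ b - a ≤ -(4 * k + 2) ∨ 4 * k + 2 ≤ b - a) := by
  obtain ⟨c, hc⟩ := pidx_eq_pidx_iff.1 h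
  refine ⟨⟨(2 * k + 1) * c, by rw [hc]; ring⟩, ?_⟩
  rcases lt_trichotomy c 0 with hc0 | rfl | hc0
  · right; left; nlinarith
  · left; linarith
  · right; right; nlinarith

theorem pidx_add_congr {a b : ℤ} (h : pidx k a = pidx k b) (c : ℤ) :
    pidx k (a + c) = pidx k (b + c) := by
  rw [pidx_eq_pidx_iff] at h ⊢
  rwa [add_sub_add_right_eq_sub]

theorem pidx_add_inj {a c d : ℤ} (hc : -(2 * k + 1) ≤ c ∧ c ≤ 2 * k)
    (hd : -(2 * k + 1) ≤ d ∧ d ≤ 2 * k) : pidx k (a + c) = pidx k (a + d) ↔ c = d := by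
  refine ⟨fun h => ?_, fun h => h ▸ rfl⟩
  have := sub_even_and_eq_or_far_of_pidx_eq h
  omega

theorem pidx_natCast_val (v : Fin (4 * k + 2)) : pidx k (v : ℕ) = v := by
  ext
  simp only [pidx]
  rw [Int.emod_eq_of_lt (by positivity) (by omega)]
  simp

theorem exists_pidx_add_eq (a : ℤ) (v : Fin (4 * k + 2)) :
    ∃ c : ℤ, (-(2 * (k : ℤ) + 1) ≤ c ∧ c ≤ 2 * k) ∧ pidx k (a + c) = v := by
  have hN : (0 : ℤ) < 4 * k + 2 := by positivity
  set r := ((v : ℕ) - a + (2 * k + 1) : ℤ) % (4 * k + 2) with hr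
  have h0 := Int.emod_nonneg ((v : ℕ) - a + (2 * k + 1) : ℤ) hN.ne'
  have h1 := Int.emod_lt_of_pos ((v : ℕ) - a + (2 * k + 1) : ℤ) hN
  refine ⟨r - (2 * k + 1), ⟨by omega, by omega⟩, ?_⟩
  conv_rhs => rw [← pidx_natCast_val v]
  rw [pidx_eq_pidx_iff, hr, Int.emod_def]
  exact ⟨((v : ℕ) - a + (2 * k + 1) : ℤ) / (4 * k + 2), by ring⟩

/-- The `k` coordinates `2j+1, 2j+3, …, 2j+2k-1` on which `P_j` imposes nothing. -/
def freeCoords (k : ℕ) (j : ℤ) : Finset (Fin (4 * k + 2)) :=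
  (Finset.range k).image fun i : ℕ => pidx k (2 * j + (2 * i + 1))

/-- `P_j` prescribes this value on every coordinate outside `freeCoords k j`; the offsets `-1`
and `0` are written out so that the `pidx_add_*` lemmas apply. -/
def patternIndicator (k : ℕ) (j : ℤ) (v : Fin (4 * k + 2)) : Bool :=
  decide (v = pidx k (2 * j + -1) ∨ v = pidx k (2 * j + 0))

variable {j : ℤ}

theorem card_freeCoords : (freeCoords k j).card = k := by
  rw [freeCoords, Finset.card_image_of_injOn, Finset.card_range]
  intro a ha b hb h
  simp only [Finset.coe_range, Set.mem_Iio] at ha hb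
  have := (pidx_add_inj (a := 2 * j) (c := 2 * a + 1) (d := 2 * b + 1) (by omega)
    (by omega)).1 h
  omega

theorem card_compl_freeCoords : (freeCoords k j)ᶜ.card = 3 * k + 2 := by
  rw [Finset.card_compl, Fintype.card_fin, card_freeCoords]
  omega

theorem pidx_add_mem_freeCoords_iff {c : ℤ} (hc : -(2 * (k : ℤ) + 1) ≤ c ∧ c ≤ 2 * k) :
    pidx k (2 * j + c) ∈ freeCoords k j ↔ 0 < c ∧ c % 2 = 1 := by
  simp only [freeCoords, Finset.mem_image, Finset.mem_range]
  constructor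
  · rintro ⟨i, hi, h⟩
    have := (pidx_add_inj (by omega) hc).1 h
    omega
  · intro h
    exact ⟨((c - 1) / 2).toNat, by omega, congrArg (pidx k) (by omega)⟩

theorem pidx_two_mul_not_mem_freeCoords (m : ℤ) : pidx k (2 * m) ∉ freeCoords k j := by
  simp only [freeCoords, Finset.mem_image, not_exists, not_and]
  intro i _ h
  have := sub_even_and_eq_or_far_of_pidx_eq h
  omega

theorem patternIndicator_pidx_add {c : ℤ} (hc : -(2 * (k : ℤ) + 1) ≤ c ∧ c ≤ 2 * k) :
    patternIndicator k j (pidx k (2 * j + c)) = decide (c = -1 ∨ c = 0) := by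
  simp only [patternIndicator, decide_eq_decide]
  rw [pidx_add_inj hc (by omega), pidx_add_inj hc (by omega)]

theorem patternIndicator_pidx_two_mul (m : ℤ) :
    patternIndicator k j (pidx k (2 * m)) = decide (pidx k (2 * m) = pidx k (2 * j)) := by
  simp only [patternIndicator, add_zero, decide_eq_decide, or_iff_right_iff_imp]
  intro h
  have := sub_even_and_eq_or_far_of_pidx_eq h
  omega

theorem satPat_iff {x : Fin (4 * k + 2) → Bool} :
    SatPat k j x ↔ ∀ v ∉ freeCoords k j, x v = patternIndicator k j v := by
  constructor
  · rintro ⟨h1, h2, h3⟩ v hv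
    obtain ⟨c, hc, rfl⟩ := exists_pidx_add_eq (2 * j) v
    rw [pidx_add_mem_freeCoords_iff hc] at hv
    rw [patternIndicator_pidx_add hc]
    rcases (by omega : c = -1 ∨ c = 0 ∨ (0 < c ∧ c % 2 = 0) ∨ (c < -1 ∧ c % 2 = 1) ∨
        (c < 0 ∧ c % 2 = 0)) with hc' | hc' | hc' | hc' | hc'
    · rw [show 2 * j + c = 2 * j - 1 by omega, h1]
      exact (decide_eq_true (by omega)).symm
    · rw [show 2 * j + c = 2 * j by omega, h2]
      exact (decide_eq_true (by omega)).symm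
    · rw [show 2 * j + c = 2 * j + 2 * (c / 2) by omega, (h3 (c / 2) (by omega) (by omega)).1]
      exact (decide_eq_false (by omega)).symm
    · rw [show 2 * j + c = 2 * j - 2 * (-(c + 1) / 2) - 1 by omega,
        (h3 (-(c + 1) / 2) (by omega) (by omega)).2.1]
      exact (decide_eq_false (by omega)).symm
    · rw [show 2 * j + c = 2 * j - 2 * (-c / 2) by omega, (h3 (-c / 2) (by omega) (by omega)).2.2]
      exact (decide_eq_false (by omega)).symm
  · intro h
    have hx : ∀ t c, t = 2 * j + c → -(2 * (k : ℤ) + 1) ≤ c ∧ c ≤ 2 * k →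
        ¬(0 < c ∧ c % 2 = 1) → x (pidx k t) = decide (c = -1 ∨ c = 0) := by
      rintro t c rfl hc hfree
      rw [h _ (by rwa [pidx_add_mem_freeCoords_iff hc]), patternIndicator_pidx_add hc]
    refine ⟨(hx _ (-1) (by ring) (by omega) (by omega)).trans (decide_eq_true (by omega)),
      (hx _ 0 (by ring) (by omega) (by omega)).trans (decide_eq_true (by omega)),
      fun i hi hik => ⟨?_, ?_, ?_⟩⟩
    · exact (hx _ (2 * i) rfl (by omega) (by omega)).trans (decide_eq_false (by omega))
    · exact (hx _ (-2 * i - 1) (by ring) (by omega) (by omega)).trans (decide_eq_false (by omega))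
    · exact (hx _ (-2 * i) (by ring) (by omega) (by omega)).trans (decide_eq_false (by omega))

theorem satPat_patternIndicator : SatPat k j (patternIndicator k j) :=
  satPat_iff.2 fun _ _ => rfl

theorem satPat_of_agree {x y : Fin (4 * k + 2) → Bool} (hx : SatPat k j x)
    (hy : ∀ v ∉ freeCoords k j, y v = x v) : SatPat k j y :=
  satPat_iff.2 fun v hv => (hy v hv).trans (satPat_iff.1 hx v hv)

theorem not_satPat_flipBit {i : Fin (4 * k + 2)} (hi : i ∉ freeCoords k 1) :
    ¬SatPat k j (flipBit (patternIndicator k 1) i) := by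
  rw [satPat_iff]
  intro h
  have hj : pidx k (2 * j) = pidx k (2 * 1) := by
    by_contra hne
    have h2 := h _ (pidx_two_mul_not_mem_freeCoords (j := j) 1)
    have h2j := h _ (pidx_two_mul_not_mem_freeCoords (j := j) j)
    have hi2 : pidx k (2 * 1) = i := by
      by_contra h2i
      rw [flipBit_apply_of_ne _ h2i, patternIndicator_pidx_two_mul,
        patternIndicator_pidx_two_mul, decide_eq_decide] at h2
      exact hne (h2.1 rfl).symm
    have hi2j : pidx k (2 * j) = i := by
      by_contra h2ji
      rw [flipBit_apply_of_ne _ h2ji, patternIndicator_pidx_two_mul,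
        patternIndicator_pidx_two_mul, decide_eq_decide] at h2j
      exact hne (h2j.2 rfl)
    exact hne (hi2j.trans hi2.symm)
  have hfree : freeCoords k j = freeCoords k 1 := by
    simp only [freeCoords, pidx_add_congr hj]
  have hpat : patternIndicator k j = patternIndicator k 1 := by
    funext v
    simp only [patternIndicator, pidx_add_congr hj]
  have hii := h i (hfree ▸ hi)
  rw [flipBit_apply_self, hpat] at hii
  exact Bool.not_ne_self _ hii

end Patterns

theorem sens1_pattern_function_general (k : ℕ)
    (g : (Fin (4*k+2) → Bool) → Bool)
    (hg : ∀ x, g x = true ↔ ∃ j : ℤ, 1 ≤ j ∧ j ≤ 2*(k:ℤ)+1 ∧ SatPat k j x) :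
    sens1 g = 3*k+2 := by
  have hx₀ : g (patternIndicator k 1) = true :=
    (hg _).2 ⟨1, le_rfl, by omega, satPat_patternIndicator⟩
  refine le_antisymm (sens1_le fun x hx => ?_) ?_
  · obtain ⟨j, hj₁, hj₂, hj⟩ := (hg x).1 hx
    rw [← card_compl_freeCoords (j := j)]
    refine sensAt_le_card fun y hy => ?_
    rw [hx, hg]
    exact ⟨j, hj₁, hj₂, satPat_of_agree hj fun v hv => hy v (Finset.mem_compl.2 hv)⟩
  · calc 3 * k + 2 = (freeCoords k 1)ᶜ.card := card_compl_freeCoords.symm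
      _ ≤ sensAt g (patternIndicator k 1) := card_le_sensAt fun i hi hflip => ?_
      _ ≤ sens1 g := sensAt_le_sens1 hx₀
    obtain ⟨j, -, -, hj⟩ := (hg _).1 (hflip.trans hx₀)
    exact not_satPat_flipBit (Finset.mem_compl.1 hi) hj

/-- For `k ≥ 1`, the pattern function `g` on `{0,1}^{4k+2}` (with `g x = 1` iff `x`
satisfies some pattern `P_j`, `j ∈ [2k+1]`) has 1-sensitivity `s₁(g) = 3k+2`. -/
theorem sens1_pattern_function (k : ℕ) (hk : 1 ≤ k)
    (g : (Fin (4*k+2) → Bool) → Bool)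
    (hg : ∀ x, g x = true ↔ ∃ j : ℤ, 1 ≤ j ∧ j ≤ 2*(k:ℤ)+1 ∧ SatPat k j x) :
    sens1 g = 3*k+2 :=
  sens1_pattern_function_general k g hg
end

section
/- For every natural number k ≥ 1, let n = 4k+2 and for j ∈ [2k+1] let P_j be the pattern on {0,1}^n requiring x_{2j-1} = x_{2j} = 1 and, for all i ∈ [k], x_{2j+2i} = 0 and x_{2j-2i-1} = x_{2j-2i} = 0 (indices modulo n). Then for any j ≠ j' in [2k+1], any y ∈ {0,1}^n satisfying P_j, and any z ∈ {0,1}^n satisfying P_{j'}, the Hamming distance between y and z is at least 3. -/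
/-- The Hamming distance between `y` and `z`: the number of coordinates where they differ. -/
def hammingDist' {ι : Type} [Fintype ι] [DecidableEq ι] (y z : ι → Bool) : ℕ :=
  (Finset.univ.filter fun i => y i ≠ z i).card

lemma hammingDist'_comm {ι : Type} [Fintype ι] [DecidableEq ι] (y z : ι → Bool) :
    hammingDist' y z = hammingDist' z y :=
  hammingDist_comm y z

lemma three_le_hammingDist' {ι : Type} [Fintype ι] [DecidableEq ι] {y z : ι → Bool}
    {a b c : ι} (hab : a ≠ b) (hac : a ≠ c) (hbc : b ≠ c)
    (ha : y a ≠ z a) (hb : y b ≠ z b) (hc : y c ≠ z c) :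
    3 ≤ hammingDist' y z := by
  have hsub : ({a, b, c} : Finset ι) ⊆ Finset.univ.filter fun i => y i ≠ z i := by
    simp [Finset.insert_subset_iff, ha, hb, hc]
  exact (Finset.card_eq_three.2 ⟨a, b, c, hab, hac, hbc, rfl⟩).symm.le.trans
    (Finset.card_le_card hsub)

lemma pidx_add_period (k : ℕ) (t : ℤ) : pidx k (t + 2 * (2 * k + 1)) = pidx k t := by
  simp [pidx, show (2 : ℤ) * (2 * k + 1) = 4 * k + 2 by ring]

lemma pidx_ne_of_lt (k : ℕ) {t s : ℤ} (hts : t < s) (hst : s < t + (4 * k + 2)) :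
    pidx k t ≠ pidx k s := by
  intro h
  have hmod : t ≡ s [ZMOD 4 * k + 2] := by
    have hval := congrArg Fin.val h
    simp only [pidx] at hval
    have ht := Int.emod_nonneg t (by positivity : (4 * (k : ℤ) + 2) ≠ 0)
    have hs := Int.emod_nonneg s (by positivity : (4 * (k : ℤ) + 2) ≠ 0)
    unfold Int.ModEq
    omega
  have hzero := Int.eq_zero_of_dvd_of_nonneg_of_lt (by omega) (by omega) hmod.dvd
  omega

lemma SatPat.add_period {k : ℕ} {j : ℤ} {x : Fin (4 * k + 2) → Bool} (h : SatPat k j x) :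
    SatPat k (j + (2 * k + 1)) x := by
  have e : ∀ t s : ℤ, t = s + 2 * (2 * k + 1) → x (pidx k t) = x (pidx k s) := by
    rintro t s rfl
    rw [pidx_add_period]
  obtain ⟨h₁, h₂, h₀⟩ := h
  refine ⟨(e _ _ (by ring)).trans h₁, (e _ _ (by ring)).trans h₂, fun i hi hik => ?_⟩
  obtain ⟨h₃, h₄, h₅⟩ := h₀ i hi hik
  exact ⟨(e _ _ (by ring)).trans h₃, (e _ _ (by ring)).trans h₄, (e _ _ (by ring)).trans h₅⟩

lemma three_le_hammingDist'_of_satPat_add {k : ℕ} {j i : ℤ} (hi : 1 ≤ i) (hik : i ≤ k)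
    {y z : Fin (4 * k + 2) → Bool} (hy : SatPat k j y) (hz : SatPat k (j + i) z) :
    3 ≤ hammingDist' y z := by
  obtain ⟨hy₁, hy₂, hy₀⟩ := hy
  obtain ⟨-, hz₂, hz₀⟩ := hz
  obtain ⟨hy₃, -, -⟩ := hy₀ i hi hik
  obtain ⟨-, hz₄, hz₅⟩ := hz₀ i hi hik
  rw [show 2 * (j + i) - 2 * i - 1 = 2 * j - 1 by ring] at hz₄
  rw [show 2 * (j + i) - 2 * i = 2 * j by ring] at hz₅
  rw [show 2 * (j + i) = 2 * j + 2 * i by ring] at hz₂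
  exact three_le_hammingDist' (a := pidx k (2 * j - 1)) (b := pidx k (2 * j))
    (c := pidx k (2 * j + 2 * i)) (pidx_ne_of_lt k (by omega) (by omega))
    (pidx_ne_of_lt k (by omega) (by omega)) (pidx_ne_of_lt k (by omega) (by omega))
    (by simp [hy₁, hz₄]) (by simp [hy₂, hz₅]) (by simp [hy₃, hz₂])

theorem pattern_hamming_distance_general (k : ℕ) (j j' : ℤ)
    (hj1 : 1 ≤ j) (hj2 : j ≤ 2*(k:ℤ)+1) (hj'1 : 1 ≤ j') (hj'2 : j' ≤ 2*(k:ℤ)+1)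
    (hne : j ≠ j') (y z : Fin (4*k+2) → Bool)
    (hy : SatPat k j y) (hz : SatPat k j' z) :
    3 ≤ hammingDist' y z := by
  wlog hlt : j < j' generalizing j j' y z
  · rw [hammingDist'_comm]
    exact this j' j hj'1 hj'2 hj1 hj2 hne.symm z y hz hy (by omega)
  rcases le_or_gt (j' - j) k with hnear | hfar
  · exact three_le_hammingDist'_of_satPat_add (by omega) hnear hy
      (by rwa [add_sub_cancel])
  · -- `P_j = P_{j + 2k + 1}` lies `2k + 1 - (j' - j) ∈ [k]` steps after `P_{j'}`
    rw [hammingDist'_comm]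
    refine three_le_hammingDist'_of_satPat_add (i := 2 * k + 1 - (j' - j)) (by omega) (by omega)
      hz ?_
    rw [show j' + (2 * k + 1 - (j' - j)) = j + (2 * k + 1) by ring]
    exact hy.add_period

/-- For `k ≥ 1` and distinct `j, j' ∈ [2k+1]`, any `y` satisfying pattern `P_j`
and any `z` satisfying pattern `P_{j'}` are at Hamming distance at least 3. -/
theorem pattern_hamming_distance (k : ℕ) (hk : 1 ≤ k) (j j' : ℤ)
    (hj1 : 1 ≤ j) (hj2 : j ≤ 2*(k:ℤ)+1) (hj'1 : 1 ≤ j') (hj'2 : j' ≤ 2*(k:ℤ)+1)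
    (hne : j ≠ j') (y z : Fin (4*k+2) → Bool)
    (hy : SatPat k j y) (hz : SatPat k j' z) :
    3 ≤ hammingDist' y z :=
  pattern_hamming_distance_general k j j' hj1 hj2 hj'1 hj'2 hne y z hy hz
end

section
/- Let g : {0,1}^N → {0,1} be a Boolean function with 0-sensitivity s_0(g) = 1 and 0-block-sensitivity bs_0(g) = k. Then the 1-sensitivity of g satisfies s_1(g) ≥ 3(k−1)/2. -/
/-!
Let `x` be a `0`-input with `k` disjoint sensitive blocks, shrunk to minimal ones `B₁, …, B_k`.
Since `s₀(g) ≤ 1`, a `0`-input with one `1`-neighbour has no other sensitive bit; propagating this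
through the subcube spanned by two blocks `P, Q` shows that the numbers `f(P, Q)` of bits of `Q`
sensitive at the `1`-input `x ⊕ P` satisfy `f(P, Q) + f(Q, P) ≥ 3` when `|P|, |Q| ≥ 2`, and
`f(P, Q) ≥ 2` when `|P| = 1`. As `s₁(g) ≥ ∑_Q f(P, Q)` for every block `P`, a singleton block gives
`s₁(g) ≥ 2(k - 1)`, and otherwise averaging over `P` gives `2 s₁(g) ≥ 3(k - 1)`.
-/

open Finset Function

section Flip

variable {ι : Type} [DecidableEq ι] (x : ι → Bool)

@[simp]
lemma flipBlock_empty : flipBlock x ∅ = x := by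
  funext j; simp [flipBlock]

lemma flipBlock_singleton (i : ι) : flipBlock x {i} = flipBit x i := by
  funext j; by_cases hj : j = i <;> simp [flipBlock, flipBit, Function.update, hj]

lemma flipBlock_flipBlock_of_disjoint {A B : Finset ι} (h : Disjoint A B) :
    flipBlock (flipBlock x A) B = flipBlock x (A ∪ B) := by
  funext j
  by_cases hB : j ∈ B
  · simp [flipBlock, hB, disjoint_right.1 h hB]
  · by_cases hA : j ∈ A <;> simp [flipBlock, hA, hB]

lemma flipBit_flipBlock_of_notMem {A : Finset ι} {i : ι} (h : i ∉ A) :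
    flipBit (flipBlock x A) i = flipBlock x (insert i A) := by
  rw [← flipBlock_singleton, flipBlock_flipBlock_of_disjoint x (disjoint_singleton_right.2 h),
    union_comm, ← insert_eq]

lemma flipBit_flipBlock_of_mem {A : Finset ι} {i : ι} (h : i ∈ A) :
    flipBit (flipBlock x A) i = flipBlock x (A.erase i) := by
  conv_lhs => rw [← insert_erase h]
  rw [← flipBit_flipBlock_of_notMem x (notMem_erase i A)]
  funext j; by_cases hj : j = i <;> simp [flipBit, Function.update, hj]

end Flip

section Sensitivity

variable {ι : Type} [Fintype ι] [DecidableEq ι] {g : (ι → Bool) → Bool} {z : ι → Bool}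

lemma sensAt_le_sens0 (hz : g z = false) : sensAt g z ≤ sens0 g :=
  le_sup (by simpa using hz)

lemma sensAt_le_sens1_s9 (hz : g z = true) : sensAt g z ≤ sens1 g :=
  le_sup (by simpa using hz)

def sensAtIn (g : (ι → Bool) → Bool) (z : ι → Bool) (Q : Finset ι) : ℕ :=
  #{i ∈ Q | g (flipBit z i) ≠ g z}

lemma sum_sensAtIn_le_sensAt {κ : Type} [Fintype κ] {Q : κ → Finset ι}
    (hQ : Pairwise (Disjoint on Q)) : ∑ j, sensAtIn g z (Q j) ≤ sensAt g z := by
  unfold sensAtIn sensAt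
  rw [← card_biUnion fun i _ j _ hij => disjoint_filter_filter (hQ hij), ← filter_biUnion]
  exact card_le_card (filter_subset_filter _ (subset_univ _))

lemma apply_flipBit_eq_false (hs0 : sens0 g ≤ 1) (hz : g z = false) {a b : ι} (hab : a ≠ b)
    (ha : g (flipBit z a) = true) : g (flipBit z b) = false := by
  by_contra hb
  rw [Bool.not_eq_false] at hb
  have hpair : {a, b} ⊆ univ.filter fun i => g (flipBit z i) ≠ g z := by
    intro i hi
    rcases mem_insert.1 hi with rfl | hi
    · simp [hz, ha]
    · rw [mem_singleton.1 hi]; simp [hz, hb]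
  have := (card_le_card hpair).trans ((sensAt_le_sens0 hz).trans hs0)
  rw [card_pair hab] at this
  omega

lemma apply_flipBlock_eq_true (hs0 : sens0 g ≤ 1) (hz : g z = true) (Y : Finset ι)
    (hY : ∀ t ∈ Y, g (flipBit z t) = true) : g (flipBlock z Y) = true := by
  induction Y using strongInduction with
  | H Y ih =>
  rcases Nat.lt_or_ge 1 #Y with hlt | hle
  · obtain ⟨a, ha, b, hb, hab⟩ := one_lt_card.1 hlt
    have hnbr : ∀ c ∈ Y, g (flipBit (flipBlock z Y) c) = true := fun c hc => by
      rw [flipBit_flipBlock_of_mem z hc]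
      exact ih _ (erase_ssubset hc) fun t ht => hY t (mem_of_mem_erase ht)
    by_contra h
    rw [Bool.not_eq_true] at h
    simpa [hnbr b hb] using apply_flipBit_eq_false hs0 h hab (hnbr a ha)
  · rcases Nat.le_one_iff_eq_zero_or_eq_one.1 hle with h0 | h1
    · simpa [card_eq_zero.1 h0] using hz
    · obtain ⟨a, rfl⟩ := card_eq_one.1 h1
      simpa [flipBlock_singleton] using hY a

lemma apply_flipBlock_eq_false (hs0 : sens0 g ≤ 1) (hz : g z = false) {u : ι} (Y : Finset ι)
    (hu : u ∉ Y) (hY : ∀ S ⊆ Y, g (flipBit (flipBlock z S) u) = true) :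
    g (flipBlock z Y) = false := by
  induction Y using Finset.induction_on with
  | empty => simpa using hz
  | insert t Y ht ih =>
    have hY' : ∀ S ⊆ Y, g (flipBit (flipBlock z S) u) = true :=
      fun S hS => hY S (hS.trans (subset_insert t Y))
    rw [← flipBit_flipBlock_of_notMem z ht]
    exact apply_flipBit_eq_false hs0 (ih (fun h => hu (mem_insert_of_mem h)) hY')
      (ne_of_mem_of_not_mem (mem_insert_self t Y) hu).symm (hY Y (subset_insert t Y))

end Sensitivity

section Blocks

variable {ι : Type} [Fintype ι] [DecidableEq ι] {g : (ι → Bool) → Bool} {x : ι → Bool}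
  {P Q Y : Finset ι} {u v : ι}

lemma apply_flipBlock_union_eq_true (hs0 : sens0 g ≤ 1) (hP : g (flipBlock x P) = true)
    (hPY : Disjoint P Y) (hY : ∀ t ∈ Y, g (flipBit (flipBlock x P) t) = true) :
    g (flipBlock x (P ∪ Y)) = true := by
  rw [← flipBlock_flipBlock_of_disjoint x hPY]
  exact apply_flipBlock_eq_true hs0 hP Y hY

omit [Fintype ι] in
lemma flipBit_flipBlock_erase_union (hu : u ∈ P) (huY : u ∉ Y) :
    flipBit (flipBlock x (P.erase u ∪ Y)) u = flipBlock x (P ∪ Y) := by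
  rw [flipBit_flipBlock_of_notMem x (by simp [huY]), ← insert_union, insert_erase hu]

lemma apply_flipBit_erase_union_eq_false (hs0 : sens0 g ≤ 1)
    (hP : Minimal (fun S ↦ g (flipBlock x S) = true) P) (hPY : Disjoint P Y)
    (hY : ∀ t ∈ Y, g (flipBit (flipBlock x P) t) = true) (hu : u ∈ P) (hv : v ≠ u) :
    g (flipBit (flipBlock x (P.erase u ∪ Y)) v) = false := by
  have huY : u ∉ Y := disjoint_left.1 hPY hu
  have hup : ∀ S ⊆ Y, g (flipBlock x (P ∪ S)) = true := fun S hS =>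
    apply_flipBlock_union_eq_true hs0 hP.prop (hPY.mono_right hS) fun t ht => hY t (hS ht)
  have hdown : g (flipBlock x (P.erase u ∪ Y)) = false := by
    have hdisj : ∀ S ⊆ Y, Disjoint (P.erase u) S := fun S hS =>
      (hPY.mono_left (erase_subset u P)).mono_right hS
    rw [← flipBlock_flipBlock_of_disjoint x (hdisj Y subset_rfl)]
    refine apply_flipBlock_eq_false hs0 (by simpa using hP.not_prop_of_lt (erase_ssubset hu))
      Y huY fun S hS => ?_
    rw [flipBlock_flipBlock_of_disjoint x (hdisj S hS),
      flipBit_flipBlock_erase_union hu fun h => huY (hS h)]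
    exact hup S hS
  refine apply_flipBit_eq_false hs0 hdown hv.symm ?_
  rw [flipBit_flipBlock_erase_union hu huY]
  exact hup Y subset_rfl

lemma false_of_insensitive_off_pivots (hs0 : sens0 g ≤ 1)
    (hP : Minimal (fun S ↦ g (flipBlock x S) = true) P)
    (hQ : Minimal (fun S ↦ g (flipBlock x S) = true) Q) (hPQ : Disjoint P Q)
    {t : ι} (hu : u ∈ P) (ht : t ∈ Q)
    (hPt : ∀ s ∈ Q.erase t, g (flipBit (flipBlock x P) s) = true)
    (hQu : ∀ s ∈ P.erase u, g (flipBit (flipBlock x Q) s) = true) : False := by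
  have htP : t ∉ P := disjoint_right.1 hPQ ht
  have hdown := apply_flipBit_erase_union_eq_false hs0 hP
    (hPQ.mono_right (erase_subset t Q)) hPt hu (v := t) (ne_of_mem_of_not_mem hu htP).symm
  have hup := apply_flipBlock_union_eq_true hs0 hQ.prop
    (hPQ.symm.mono_right (erase_subset u P)) hQu
  rw [flipBit_flipBlock_of_notMem x (by simp [htP]), ← union_insert, insert_erase ht,
    union_comm] at hdown
  simp [hdown] at hup

lemma false_of_insensitive_off_two (hs0 : sens0 g ≤ 1)
    (hP : Minimal (fun S ↦ g (flipBlock x S) = true) P)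
    (hQ : Minimal (fun S ↦ g (flipBlock x S) = true) Q) (hPQ : Disjoint P Q)
    (hPQ0 : ∀ t ∈ Q, g (flipBit (flipBlock x P) t) = true)
    {w : ι} (hu : u ∈ P) (hw : w ∈ P) (huw : u ≠ w)
    (hQuw : ∀ s ∈ (P.erase u).erase w, g (flipBit (flipBlock x Q) s) = true) : False := by
  have hdown := apply_flipBit_erase_union_eq_false hs0 hP hPQ hPQ0 hu huw.symm
  have hup := apply_flipBlock_union_eq_true hs0 hQ.prop
    (hPQ.symm.mono_right ((erase_subset w _).trans (erase_subset u P))) hQuw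
  rw [flipBit_flipBlock_of_mem x (mem_union_left Q (mem_erase.2 ⟨huw.symm, hw⟩)),
    erase_union_distrib, erase_eq_of_notMem (disjoint_left.1 hPQ hw), union_comm] at hdown
  simp [hdown] at hup

end Blocks

section Pairs

variable {ι : Type} [Fintype ι] [DecidableEq ι] {g : (ι → Bool) → Bool} {x : ι → Bool}
  {P Q : Finset ι}

omit [Fintype ι] in
lemma exists_subset_card_eq_of_sensAtIn_le {z : ι → Bool} {n : ℕ} (h : sensAtIn g z Q ≤ n)
    (hn : n ≤ #Q) : ∃ T ⊆ Q, #T = n ∧ ∀ s ∈ Q \ T, g (flipBit z s) = g z := by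
  obtain ⟨T, hsT, hTQ, hT⟩ := exists_subsuperset_card_eq (filter_subset _ Q) h hn
  refine ⟨T, hTQ, hT, fun s hs => ?_⟩
  rw [mem_sdiff] at hs
  by_contra hne
  exact hs.2 (hsT (mem_filter.2 ⟨hs.1, hne⟩))

omit [Fintype ι] in
lemma nonempty_of_minimal (hx : g x = false)
    (hP : Minimal (fun S ↦ g (flipBlock x S) = true) P) : P.Nonempty := by
  rw [nonempty_iff_ne_empty]
  rintro rfl
  simpa [hx] using hP.prop

lemma one_lt_sensAtIn_or_one_lt_sensAtIn (hs0 : sens0 g ≤ 1) (hx : g x = false)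
    (hP : Minimal (fun S ↦ g (flipBlock x S) = true) P)
    (hQ : Minimal (fun S ↦ g (flipBlock x S) = true) Q) (hPQ : Disjoint P Q) :
    1 < sensAtIn g (flipBlock x P) Q ∨ 1 < sensAtIn g (flipBlock x Q) P := by
  by_contra! h
  obtain ⟨T, hTQ, hT, hPT⟩ :=
    exists_subset_card_eq_of_sensAtIn_le h.1 (nonempty_of_minimal hx hQ).card_pos
  obtain ⟨U, hUP, hU, hQU⟩ :=
    exists_subset_card_eq_of_sensAtIn_le h.2 (nonempty_of_minimal hx hP).card_pos
  obtain ⟨t, rfl⟩ := card_eq_one.1 hT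
  obtain ⟨u, rfl⟩ := card_eq_one.1 hU
  rw [sdiff_singleton_eq_erase] at hPT hQU
  exact false_of_insensitive_off_pivots hs0 hP hQ hPQ (hUP (mem_singleton_self u))
    (hTQ (mem_singleton_self t)) (fun s hs => (hPT s hs).trans hP.prop)
    (fun s hs => (hQU s hs).trans hQ.prop)

lemma two_lt_sensAtIn_of_sensAtIn_eq_zero (hs0 : sens0 g ≤ 1)
    (hP : Minimal (fun S ↦ g (flipBlock x S) = true) P)
    (hQ : Minimal (fun S ↦ g (flipBlock x S) = true) Q) (hPQ : Disjoint P Q)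
    (h0 : sensAtIn g (flipBlock x P) Q = 0) (hP2 : 2 ≤ #P) :
    2 < sensAtIn g (flipBlock x Q) P := by
  by_contra! h
  obtain ⟨T, hTP, hT, hQT⟩ := exists_subset_card_eq_of_sensAtIn_le h hP2
  obtain ⟨w, u, hwu, rfl⟩ := card_eq_two.1 hT
  rw [sdiff_insert, sdiff_singleton_eq_erase] at hQT
  have hPQ0 : ∀ t ∈ Q, g (flipBit (flipBlock x P) t) = true := fun t ht => by
    simpa [hP.prop] using filter_eq_empty_iff.1 (card_eq_zero.1 h0) ht
  exact false_of_insensitive_off_two hs0 hP hQ hPQ hPQ0 (hTP (by simp)) (hTP (by simp))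
    hwu.symm fun s hs => (hQT s hs).trans hQ.prop

lemma three_le_sensAtIn_add_sensAtIn (hs0 : sens0 g ≤ 1) (hx : g x = false)
    (hP : Minimal (fun S ↦ g (flipBlock x S) = true) P)
    (hQ : Minimal (fun S ↦ g (flipBlock x S) = true) Q) (hPQ : Disjoint P Q)
    (hP2 : 2 ≤ #P) (hQ2 : 2 ≤ #Q) :
    3 ≤ sensAtIn g (flipBlock x P) Q + sensAtIn g (flipBlock x Q) P := by
  have := one_lt_sensAtIn_or_one_lt_sensAtIn hs0 hx hP hQ hPQ
  rcases Nat.eq_zero_or_pos (sensAtIn g (flipBlock x P) Q) with h | h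
  · have := two_lt_sensAtIn_of_sensAtIn_eq_zero hs0 hP hQ hPQ h hP2
    omega
  rcases Nat.eq_zero_or_pos (sensAtIn g (flipBlock x Q) P) with h' | h'
  · have := two_lt_sensAtIn_of_sensAtIn_eq_zero hs0 hQ hP hPQ.symm h' hQ2
    omega
  omega

lemma two_le_sensAtIn_of_card_eq_one (hs0 : sens0 g ≤ 1) (hx : g x = false)
    (hP : Minimal (fun S ↦ g (flipBlock x S) = true) P)
    (hQ : Minimal (fun S ↦ g (flipBlock x S) = true) Q) (hPQ : Disjoint P Q) (hP1 : #P = 1) :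
    2 ≤ sensAtIn g (flipBlock x P) Q := by
  have : sensAtIn g (flipBlock x Q) P ≤ #P := card_filter_le _ _
  have := one_lt_sensAtIn_or_one_lt_sensAtIn hs0 hx hP hQ hPQ
  omega

end Pairs

lemma three_mul_card_sub_one_le_two_mul {κ : Type*} [Fintype κ] [DecidableEq κ]
    (f : κ → κ → ℕ) (s : ℕ) (hpair : ∀ i j, i ≠ j → 3 ≤ f i j + f j i)
    (hrow : ∀ i, ∑ j ∈ univ.erase i, f i j ≤ s) :
    3 * (Fintype.card κ - 1) ≤ 2 * s := by
  set k := Fintype.card κ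
  have hcard : ∀ i : κ, #(univ.erase i) = k - 1 := fun i => by
    rw [card_erase_of_mem (mem_univ i), card_univ]
  have hlow : k * (3 * (k - 1)) ≤ 2 * ∑ i, ∑ j ∈ univ.erase i, f i j :=
    calc k * (3 * (k - 1))
      _ = ∑ i : κ, ∑ j ∈ univ.erase i, 3 := by
        simp only [sum_const, hcard, card_univ, smul_eq_mul]; ring
      _ ≤ ∑ i, ∑ j ∈ univ.erase i, (f i j + f j i) :=
        sum_le_sum fun i _ => sum_le_sum fun j hj => hpair i j (ne_of_mem_erase hj).symm
      _ = 2 * ∑ i, ∑ j ∈ univ.erase i, f i j := by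
        rw [two_mul]
        simp only [sum_add_distrib]
        congr 1
        exact sum_comm' fun i j => by simp [ne_comm]
  have hup : ∑ i, ∑ j ∈ univ.erase i, f i j ≤ k * s := by
    simpa using sum_le_sum fun i (_ : i ∈ univ) => hrow i
  rcases Nat.eq_zero_or_pos k with hk | hk
  · simp [hk]
  · refine Nat.le_of_mul_le_mul_left (hlow.trans ?_) hk
    rw [mul_left_comm]
    exact Nat.mul_le_mul_left 2 hup

section Main

variable {ι : Type} [Fintype ι] [DecidableEq ι] {g : (ι → Bool) → Bool} {x : ι → Bool}

lemma three_mul_card_sub_one_le_two_mul_sens1 {κ : Type} [Fintype κ] [DecidableEq κ]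
    (hs0 : sens0 g ≤ 1) (hx : g x = false) (B : κ → Finset ι)
    (hB : ∀ i, Minimal (fun S ↦ g (flipBlock x S) = true) (B i))
    (hdisj : Pairwise (Disjoint on B)) :
    3 * (Fintype.card κ - 1) ≤ 2 * sens1 g := by
  set f := fun i j => sensAtIn g (flipBlock x (B i)) (B j)
  have hrow : ∀ i, ∑ j ∈ univ.erase i, f i j ≤ sens1 g := fun i =>
    (sum_le_sum_of_subset (erase_subset i univ)).trans <|
      (sum_sensAtIn_le_sensAt hdisj).trans (sensAt_le_sens1_s9 (hB i).prop)
  by_cases hsingle : ∃ i, #(B i) = 1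
  · obtain ⟨i, hi⟩ := hsingle
    have : 2 * (Fintype.card κ - 1) ≤ sens1 g :=
      calc 2 * (Fintype.card κ - 1)
        _ = ∑ j ∈ univ.erase i, 2 := by simp [card_erase_of_mem, mul_comm]
        _ ≤ ∑ j ∈ univ.erase i, f i j := sum_le_sum fun j hj =>
          two_le_sensAtIn_of_card_eq_one hs0 hx (hB i) (hB j) (hdisj (ne_of_mem_erase hj).symm) hi
        _ ≤ sens1 g := hrow i
    omega
  · have h2 : ∀ i, 2 ≤ #(B i) := fun i => by
      have := (nonempty_of_minimal hx (hB i)).card_pos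
      have : #(B i) ≠ 1 := fun h => hsingle ⟨i, h⟩
      omega
    exact three_mul_card_sub_one_le_two_mul f _ (fun i j hij =>
      three_le_sensAtIn_add_sensAtIn hs0 hx (hB i) (hB j) (hdisj hij) (h2 i) (h2 j)) hrow

lemma exists_pairwise_disjoint_blocks_bsAt (g : (ι → Bool) → Bool) (x : ι → Bool) :
    ∃ B : Fin (bsAt g x) → Finset ι,
      Pairwise (Disjoint on B) ∧ ∀ p, g (flipBlock x (B p)) ≠ g x := by
  have hbdd : BddAbove {b : ℕ | ∃ B : Fin b → Finset ι,
      Pairwise (Disjoint on B) ∧ ∀ p, g (flipBlock x (B p)) ≠ g x} := by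
    refine ⟨Fintype.card ι, ?_⟩
    rintro b ⟨B, hdisj, hB⟩
    have hne : ∀ p, (B p).Nonempty := fun p =>
      nonempty_iff_ne_empty.2 fun h => hB p (by simp [h])
    calc b
      _ = ∑ _p : Fin b, 1 := by simp
      _ ≤ ∑ p, #(B p) := sum_le_sum fun p _ => (hne p).card_pos
      _ = #(univ.biUnion B) := (card_biUnion fun p _ q _ h => hdisj h).symm
      _ ≤ Fintype.card ι := card_le_univ _
  refine Nat.sSup_mem ?_ hbdd
  exact ⟨0, Fin.elim0, fun p => p.elim0, fun p => p.elim0⟩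

theorem three_mul_bsAt_sub_one_le_two_mul_sens1 (hs0 : sens0 g ≤ 1) (hx : g x = false) :
    3 * (bsAt g x - 1) ≤ 2 * sens1 g := by
  obtain ⟨B, hdisj, hB⟩ := exists_pairwise_disjoint_blocks_bsAt g x
  choose M hMB hM using fun p => exists_minimal_le_of_wellFoundedLT
    (fun S ↦ g (flipBlock x S) = true) (B p) (by simpa [hx] using hB p)
  simpa using three_mul_card_sub_one_le_two_mul_sens1 hs0 hx M hM
    fun p q h => (hdisj h).mono (hMB p) (hMB q)

end Main

theorem sens1_ge_of_sens0_eq_one_general {N : ℕ} (g : (Fin N → Bool) → Bool)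
    (hs0 : sens0 g = 1) (k : ℕ) (hbs0 : bs0 g = k) :
    3 * (k - 1) ≤ 2 * sens1 g := by
  rcases Nat.eq_zero_or_pos k with rfl | hk
  · simp
  obtain ⟨x, hx, hkx⟩ := (Finset.le_sup_iff hk).1 hbs0.ge
  calc 3 * (k - 1)
    _ ≤ 3 * (bsAt g x - 1) := by omega
    _ ≤ 2 * sens1 g := three_mul_bsAt_sub_one_le_two_mul_sens1 hs0.le (by simpa using hx)

/-- If `g : {0,1}^N → {0,1}` (attaining both values) has `s₀(g) = 1` and `bs₀(g) = k`,
then `s₁(g) ≥ 3(k−1)/2`, stated over ℕ as `3·(k−1) ≤ 2·s₁(g)`. -/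
theorem sens1_ge_of_sens0_eq_one {N : ℕ} (g : (Fin N → Bool) → Bool)
    (hg0 : ∃ x, g x = false) (hg1 : ∃ x, g x = true)
    (hs0 : sens0 g = 1) (k : ℕ) (hbs0 : bs0 g = k) :
    3 * (k - 1) ≤ 2 * sens1 g :=
  sens1_ge_of_sens0_eq_one_general g hs0 k hbs0
end
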